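/- Let x ≥ 2 and, for i ∈ {1,2}, let L_i = {1^{a_i}, x^{b_i}} be a multiset of size v_i = a_i + b_i + 1. Set a = a_1 + a_2, b = b_1 + b_2 and y = a + b + 1. Suppose L_1 has a perfect linear realization and L_2 has a standard linear realization. Let c ≥ 0 and v = a + b + c + 1. If either v_1 is even and v ≡ v_1 (mod y), or v_1 is odd and v ≡ v_2 + 1 (mod y), then the multiset {1^a, x^b, y^c} has a standard linear realization. -/

import Mathlib

/-- The multiset of absolute differences of consecutive entries of a list of naturals. -/
def linDiffs (l : List ℕ) : Multiset ℕ :=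
  ↑(List.zipWith (fun a b => (a - b) + (b - a)) l l.tail)

/-- `l` is a linear realization of the multiset `L`: it lists `0, …, |L|`
(each exactly once) and its consecutive absolute differences form `L`. -/
def IsLinearRealization (L : Multiset ℕ) (l : List ℕ) : Prop :=
  l.Perm (List.range (Multiset.card L + 1)) ∧ linDiffs l = L

def HasLinearRealization (L : Multiset ℕ) : Prop :=
  ∃ l : List ℕ, IsLinearRealization L l

/-- A standard linear realization starts at `0`. -/
def HasStandardLinearRealization (L : Multiset ℕ) : Prop :=
  ∃ l : List ℕ, IsLinearRealization L l ∧ l.head? = some 0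

/-- A perfect linear realization starts at `0` and ends at `v - 1 = |L|`. -/
def HasPerfectLinearRealization (L : Multiset ℕ) : Prop :=
  ∃ l : List ℕ, IsLinearRealization L l ∧ l.head? = some 0 ∧
    l.getLast? = some (Multiset.card L)

/-- The multiset of cyclic edge-lengths `min(|gᵢ₊₁ - gᵢ|, v - |gᵢ₊₁ - gᵢ|)`
of consecutive entries of a list of naturals. -/
def cycDiffs (v : ℕ) (l : List ℕ) : Multiset ℕ :=
  ↑(List.zipWith (fun a b => min ((a - b) + (b - a)) (v - ((a - b) + (b - a)))) l l.tail)

/-- `L` is (cyclically) realizable in `K_v`: some Hamiltonian path on the vertex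
set `{0, …, v-1}` has `L` as its multiset of edge-lengths. -/
def IsRealizable (v : ℕ) (L : Multiset ℕ) : Prop :=
  ∃ l : List ℕ, l.Perm (List.range v) ∧ cycDiffs v l = L

/-- The multiset `{1^a, x^b, y^c}`. -/
def mset3 (a b c x y : ℕ) : Multiset ℕ :=
  Multiset.replicate a 1 + Multiset.replicate b x + Multiset.replicate c y

/-- With `b = q'x + r'`, `0 ≤ r' < x`: `ω(x,b) = x - 1` if `q' = 0`, `r' = 1`,
or at least one of `x`, `r'` is even; otherwise `ω(x,b) = x`. -/
def omegaBHR (x b : ℕ) : ℕ :=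
  if b / x = 0 ∨ b % x = 1 ∨ Even x ∨ Even (b % x) then x - 1 else x

/-- The reduced form `ĝ = min(g, v - g)`. -/
def reducedForm (v g : ℕ) : ℕ := min g (v - g)

/-- The function `f` of Theorem 3.7 (counterexample characterization refined). -/
def fBHR (u w : ℕ) : ℕ :=
  if Even u ∧ Even w then w - 1
  else if u = 3 ∨ (Even u ∧ ¬ Even w) then u + w - 2
  else u + w - 1

/-- A multiset `L` of size `v - 1` with elements in `{1, …, ⌊v/2⌋}` is admissible
if for every divisor `d` of `v` the number of elements of `L` divisible by `d`
is at most `v - d`. -/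
def IsAdmissible (v : ℕ) (L : Multiset ℕ) : Prop :=
  Multiset.card L = v - 1 ∧ (∀ z ∈ L, 1 ≤ z ∧ z ≤ v / 2) ∧
  ∀ d : ℕ, d ∣ v → Multiset.card (L.filter (fun z => d ∣ z)) ≤ v - d

/-!
Gluing a perfect realization `g` of `L₁` (which ends at `v₁ - 1`) to a standard realization of
`L₂` translated by `v₁ - 1` gives a standard realization `w` of `L₁ + L₂` on `{0, …, y - 1}`.
The copies of `y` come from the residue classes of `{0, …, v - 1}` modulo `y`: walk along `w`,
running up the class of the first entry, down the class of the second, and so on. Consecutive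
classes of equal height are joined at both ends exactly as the entries of `w`; the classes have two
heights, and the congruence on `v` makes the height change after the first `v₁` entries of `w`,
at a bottom junction when `v₁` is even. When `v₁` is odd, walk instead through `{1, …, v - 1}`
along the reflection `y - 1 - w`, where the height changes after `v₁ - 1` entries; this walk starts
at `y`, so `0` can be put in front of it.
-/

open List

section LinDiffs

@[simp] lemma linDiffs_nil : linDiffs [] = 0 := rfl

@[simp] lemma linDiffs_singleton (a : ℕ) : linDiffs [a] = 0 := rfl

lemma linDiffs_cons_cons (a b : ℕ) (l : List ℕ) :
    linDiffs (a :: b :: l) = a.dist b ::ₘ linDiffs (b :: l) := rfl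

lemma card_linDiffs (l : List ℕ) : Multiset.card (linDiffs l) = l.length - 1 := by
  simp [linDiffs]

lemma card_linDiffs_of_perm {l : List ℕ} {n : ℕ} (hl : l.Perm (range (n + 1))) :
    Multiset.card (linDiffs l) = n := by
  simp [card_linDiffs, hl.length_eq]

/-- `l₁.getLast?.toList ++ l₂.head?.toList` has at most two entries; its difference is the one
across the junction. -/
lemma linDiffs_append (l₁ l₂ : List ℕ) :
    linDiffs (l₁ ++ l₂) =
      linDiffs l₁ + linDiffs (l₁.getLast?.toList ++ l₂.head?.toList) + linDiffs l₂ := by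
  induction l₁ with
  | nil => cases l₂ <;> simp
  | cons a t ih =>
    cases t with
    | nil => cases l₂ <;> simp [linDiffs_cons_cons]
    | cons b t =>
      rw [cons_append, cons_append, linDiffs_cons_cons, ← cons_append, ih, linDiffs_cons_cons,
        getLast?_cons_cons]
      simp only [Multiset.cons_add]

lemma linDiffs_append_eq_replicate_add {P₁ P₂ w₁ w₂ : List ℕ} {n₁ n₂ y : ℕ}
    (hl : P₁.getLast? = w₁.getLast?) (hh : P₂.head? = w₂.head?)
    (h₁ : linDiffs P₁ = Multiset.replicate n₁ y + linDiffs w₁)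
    (h₂ : linDiffs P₂ = Multiset.replicate n₂ y + linDiffs w₂) :
    linDiffs (P₁ ++ P₂) = Multiset.replicate (n₁ + n₂) y + linDiffs (w₁ ++ w₂) := by
  rw [linDiffs_append P₁, linDiffs_append w₁, hl, hh, h₁, h₂, Multiset.replicate_add]
  abel

lemma linDiffs_map {f : ℕ → ℕ} {l : List ℕ}
    (hf : ∀ a ∈ l, ∀ b ∈ l, (f a).dist (f b) = a.dist b) : linDiffs (l.map f) = linDiffs l := by
  induction l with
  | nil => rfl
  | cons a t ih =>
    cases t with
    | nil => rfl
    | cons b t =>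
      rw [map_cons, map_cons, linDiffs_cons_cons, ← map_cons, ih, linDiffs_cons_cons,
        hf a (by simp) b (by simp)]
      exact fun c hc d hd => hf c (mem_cons_of_mem a hc) d (mem_cons_of_mem a hd)

lemma linDiffs_map_add (k : ℕ) (l : List ℕ) : linDiffs (l.map (· + k)) = linDiffs l :=
  linDiffs_map fun a _ b _ => Nat.dist_add_add_right a k b

lemma linDiffs_map_sub {k : ℕ} {l : List ℕ} (hl : ∀ a ∈ l, a ≤ k) :
    linDiffs (l.map (k - ·)) = linDiffs l :=
  linDiffs_map fun a ha b hb => by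
    have := hl a ha
    have := hl b hb
    simp only [Nat.dist]
    omega

lemma linDiffs_reverse (l : List ℕ) : linDiffs l.reverse = linDiffs l := by
  induction l with
  | nil => rfl
  | cons a t ih =>
    rw [reverse_cons, linDiffs_append t.reverse, ih, getLast?_reverse,
      show a :: t = [a] ++ t from rfl, linDiffs_append [a] t]
    cases t.head? <;> simp [linDiffs_cons_cons, Nat.dist_comm, add_comm]

lemma linDiffs_range' (s n d : ℕ) : linDiffs (range' s n d) = Multiset.replicate (n - 1) d := by
  induction n generalizing s with
  | zero => rfl
  | succ n ih =>
    cases n with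
    | zero => rfl
    | succ n =>
      rw [range'_succ, range'_succ, linDiffs_cons_cons, ← range'_succ, ih]
      simp [Nat.dist, Multiset.replicate_succ]

end LinDiffs

section Gluing

lemma dropLast_append_eq_append_tail {α : Type*} {l₁ l₂ : List α}
    (h : l₁.getLast? = l₂.head?) : l₁.dropLast ++ l₂ = l₁ ++ l₂.tail := by
  cases l₂ with
  | nil => simp_all
  | cons b t =>
    obtain ⟨l, rfl⟩ := getLast?_eq_some_iff.1 h
    simp

lemma linDiffs_dropLast_append {l₁ l₂ : List ℕ} (h : l₁.getLast? = l₂.head?) :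
    linDiffs (l₁.dropLast ++ l₂) = linDiffs l₁ + linDiffs l₂ := by
  cases l₂ with
  | nil => simp_all
  | cons b t =>
    obtain ⟨l, rfl⟩ := getLast?_eq_some_iff.1 h
    rw [dropLast_concat, linDiffs_append l, linDiffs_append l [b]]
    simp

lemma perm_range_dropLast {g : List ℕ} {n : ℕ} (hg : g.Perm (range (n + 1)))
    (hgl : g.getLast? = some n) : g.dropLast.Perm (range n) := by
  obtain ⟨l, rfl⟩ := getLast?_eq_some_iff.1 hgl
  rw [range_succ] at hg
  simpa using (perm_append_right_iff [n]).1 hg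

lemma perm_range_dropLast_append_map_add {g h : List ℕ} {n₁ n₂ : ℕ}
    (hg : g.Perm (range (n₁ + 1))) (hgl : g.getLast? = some n₁) (hh : h.Perm (range (n₂ + 1))) :
    (g.dropLast ++ h.map (· + n₁)).Perm (range (n₁ + n₂ + 1)) := by
  rw [add_assoc, range_add]
  refine (perm_range_dropLast hg hgl).append ?_
  simpa only [add_comm _ n₁] using hh.map (· + n₁)

end Gluing

section Snake

lemma head?_range'_of_pos {s n d : ℕ} (hn : 0 < n) : (range' s n d).head? = some s := by
  obtain ⟨n, rfl⟩ := Nat.exists_eq_add_one_of_ne_zero hn.ne'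
  rfl

lemma getLast?_range'_of_pos {s n d : ℕ} (hn : 0 < n) :
    (range' s n d).getLast? = some (s + d * (n - 1)) := by
  obtain ⟨n, rfl⟩ := Nat.exists_eq_add_one_of_ne_zero hn.ne'
  simp [range'_concat]

variable {y v : ℕ}

/-- For `u < y`, the number of `z < v` with `z ≡ u [MOD y]`, i.e. the length of the column
`range' u (columnHeight y v u) y` of `range v`. -/
def columnHeight (y v u : ℕ) : ℕ := v / y + if u < v % y then 1 else 0

lemma columnHeight_pos (hy : 0 < y) (hyv : y ≤ v) (u : ℕ) : 0 < columnHeight y v u :=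
  Nat.add_pos_left (Nat.div_pos hyv hy) _

lemma columnHeight_eq_of_lt {t u u' : ℕ} (ht : t ≤ y) (hv : v % y = t % y) (hu : u < t)
    (hu' : u' < t) : columnHeight y v u = columnHeight y v u' := by
  have : t % y = t ∨ t % y = 0 := by
    rcases ht.lt_or_eq with ht | rfl
    · exact .inl (Nat.mod_eq_of_lt ht)
    · exact .inr (Nat.mod_self t)
  unfold columnHeight
  split_ifs <;> omega

lemma columnHeight_eq_of_le {t u u' : ℕ} (hv : v % y = t % y) (hu : t ≤ u) (hu' : t ≤ u') :
    columnHeight y v u = columnHeight y v u' := by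
  have := Nat.mod_le t y
  unfold columnHeight
  split_ifs <;> omega

lemma mem_range'_columnHeight {u z : ℕ} (hu : u < y) :
    z ∈ range' u (columnHeight y v u) y ↔ z < v ∧ z % y = u := by
  have hdiv := Nat.div_add_mod v y
  have hmod := Nat.mod_lt v (hu.trans_le' (Nat.zero_le u))
  rw [mem_range']
  constructor
  · rintro ⟨i, hi, rfl⟩
    refine ⟨?_, by simp [Nat.mod_eq_of_lt hu]⟩
    unfold columnHeight at hi
    split_ifs at hi with h
    · have := Nat.mul_le_mul_left y (Nat.lt_succ_iff.1 hi)
      omega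
    · have := Nat.mul_le_mul_left y (Nat.succ_le_of_lt (by simpa using hi))
      rw [Nat.mul_succ] at this
      omega
  · rintro ⟨hz, rfl⟩
    refine ⟨z / y, ?_, by rw [add_comm, Nat.div_add_mod]⟩
    have hdz := Nat.div_add_mod z y
    unfold columnHeight
    rcases lt_trichotomy (z / y) (v / y) with h | h | h
    · omega
    · have : z % y < v % y := by rw [h] at hdz; omega
      simp [h, this]
    · have := Nat.mul_le_mul_left y (Nat.succ_le_of_lt h)
      rw [Nat.mul_succ] at this
      omega

lemma bind_range_range'_columnHeight (hy : 0 < y) (v : ℕ) :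
    (Multiset.range y).bind (fun u => (range' u (columnHeight y v u) y : Multiset ℕ)) =
      Multiset.range v := by
  have hmem : ∀ u ∈ Multiset.range y, ∀ z,
      z ∈ (range' u (columnHeight y v u) y : Multiset ℕ) ↔ z < v ∧ z % y = u := fun u hu z => by
    rw [Multiset.mem_range] at hu
    simpa using mem_range'_columnHeight hu
  refine (Multiset.Nodup.ext ?_ (Multiset.nodup_range v)).2 fun z => ?_
  · refine Multiset.nodup_bind.2 ⟨fun u _ => Multiset.coe_nodup.2 (nodup_range' y hy),
      (Multiset.nodup_range y).pairwise fun u hu u' hu' hne => ?_⟩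
    refine Multiset.disjoint_left.2 fun hz hz' => hne ?_
    exact ((hmem u hu _).1 hz).2.symm.trans ((hmem u' hu' _).1 hz').2
  · simp only [Multiset.mem_bind, Multiset.mem_range]
    constructor
    · rintro ⟨u, hu, hz⟩
      exact ((hmem u (Multiset.mem_range.2 hu) z).1 hz).1
    · intro hz
      have hzy := Nat.mod_lt z hy
      exact ⟨z % y, hzy, (hmem _ (Multiset.mem_range.2 hzy) z).2 ⟨hz, rfl⟩⟩

def snake (y v : ℕ) : List ℕ → List ℕ
  | [] => []
  | [u] => range' u (columnHeight y v u) y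
  | u :: u' :: us =>
    range' u (columnHeight y v u) y ++ (range' u' (columnHeight y v u') y).reverse ++ snake y v us

lemma coe_snake (w : List ℕ) :
    (snake y v w : Multiset ℕ) =
      (w : Multiset ℕ).bind fun u => range' u (columnHeight y v u) y := by
  induction w using snake.induct with
  | case1 => rfl
  | case2 u => simp [snake]
  | case3 u u' us ih =>
    simp only [snake, ← Multiset.coe_add, Multiset.coe_reverse, ih, ← Multiset.cons_coe,
      Multiset.cons_bind, add_assoc]

lemma snake_perm_range (hy : 0 < y) {w : List ℕ} (hw : w.Perm (range y)) :
    (snake y v w).Perm (range v) := by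
  rw [← Multiset.coe_eq_coe, coe_snake, Multiset.coe_eq_coe.2 hw, Multiset.coe_range,
    bind_range_range'_columnHeight hy, Multiset.coe_range]

lemma snake_append {w₁ : List ℕ} (h : Even w₁.length) (w₂ : List ℕ) :
    snake y v (w₁ ++ w₂) = snake y v w₁ ++ snake y v w₂ := by
  induction w₁ using snake.induct with
  | case1 => rfl
  | case2 u => simp at h
  | case3 u u' us ih =>
    simp only [cons_append, snake, append_assoc]
    rw [ih (by simpa [Nat.even_add_one] using h)]

lemma head?_snake (hy : 0 < y) (hyv : y ≤ v) (w : List ℕ) : (snake y v w).head? = w.head? := by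
  cases w with
  | nil => rfl
  | cons u us =>
    have hu := head?_range'_of_pos (s := u) (d := y) (columnHeight_pos hy hyv u)
    cases us <;> simp [snake, head?_append, hu]

/-- An even number of columns ends at the bottom of the last one. -/
lemma getLast?_snake (hy : 0 < y) (hyv : y ≤ v) {w : List ℕ} (hw : Even w.length) :
    (snake y v w).getLast? = w.getLast? := by
  induction w using snake.induct with
  | case1 => rfl
  | case2 u => simp at hw
  | case3 u u' us ih =>
    rw [snake, getLast?_append, ih (by simpa [Nat.even_add_one] using hw), getLast?_append,
      getLast?_reverse, head?_range'_of_pos (columnHeight_pos hy hyv u'),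
      show u :: u' :: us = [u, u'] ++ us from rfl, getLast?_append]
    rfl

/-- Along columns of equal height the walk turns at the top and at the bottom in the same way as
`w`, so only copies of `y` are added to the differences of `w`. -/
lemma linDiffs_snake_of_columnHeight_eq (hy : 0 < y) (hyv : y ≤ v) {w : List ℕ}
    (hw : ∀ u ∈ w, ∀ u' ∈ w, columnHeight y v u = columnHeight y v u') :
    ∃ n, linDiffs (snake y v w) = Multiset.replicate n y + linDiffs w := by
  induction w using snake.induct with
  | case1 => exact ⟨0, rfl⟩
  | case2 u => exact ⟨columnHeight y v u - 1, by simp [snake, linDiffs_range']⟩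
  | case3 u u' us ih =>
    obtain ⟨n, hn⟩ := ih fun a ha b hb => hw a (by simp [ha]) b (by simp [hb])
    set H := columnHeight y v u
    have hH : columnHeight y v u' = H := hw u' (by simp) u (by simp)
    have hpos : 0 < H := columnHeight_pos hy hyv u
    have hpair : linDiffs (range' u H y ++ (range' u' H y).reverse) =
        Multiset.replicate (2 * (H - 1)) y + linDiffs [u, u'] := by
      rw [linDiffs_append, linDiffs_reverse, getLast?_range'_of_pos hpos, head?_reverse,
        getLast?_range'_of_pos hpos, linDiffs_range', linDiffs_range', two_mul,
        Multiset.replicate_add]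
      simp only [Option.toList_some, cons_append, nil_append, linDiffs_cons_cons,
        Nat.dist_add_add_right, linDiffs_singleton, Multiset.cons_zero]
      abel
    refine ⟨2 * (H - 1) + n, ?_⟩
    rw [snake, hH, show u :: u' :: us = [u, u'] ++ us from rfl]
    refine linDiffs_append_eq_replicate_add ?_ (head?_snake hy hyv us) hpair hn
    rw [getLast?_append, getLast?_reverse, head?_range'_of_pos hpos]
    rfl

/-- The first block has an even number of columns, so the walk passes from it to the second
block at the bottom, where a change of column height does not matter. -/
lemma linDiffs_snake_append (hy : 0 < y) (hyv : y ≤ v) {w₁ w₂ : List ℕ}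
    (heven : Even w₁.length)
    (h₁ : ∀ u ∈ w₁, ∀ u' ∈ w₁, columnHeight y v u = columnHeight y v u')
    (h₂ : ∀ u ∈ w₂, ∀ u' ∈ w₂, columnHeight y v u = columnHeight y v u') :
    ∃ n, linDiffs (snake y v (w₁ ++ w₂)) = Multiset.replicate n y + linDiffs (w₁ ++ w₂) := by
  obtain ⟨n₁, hn₁⟩ := linDiffs_snake_of_columnHeight_eq hy hyv h₁
  obtain ⟨n₂, hn₂⟩ := linDiffs_snake_of_columnHeight_eq hy hyv h₂
  refine ⟨n₁ + n₂, ?_⟩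
  rw [snake_append heven]
  exact linDiffs_append_eq_replicate_add (getLast?_snake hy hyv heven) (head?_snake hy hyv w₂)
    hn₁ hn₂

end Snake

lemma hasStandardLinearRealization_of_perm_range {P : List ℕ} {M : Multiset ℕ} {n y c : ℕ}
    (hP : P.Perm (range (Multiset.card M + c + 1))) (h0 : P.head? = some 0)
    (hd : linDiffs P = Multiset.replicate n y + M) :
    HasStandardLinearRealization (Multiset.replicate c y + M) := by
  have hn : n = c := by
    have := congrArg Multiset.card hd
    rw [card_linDiffs, hP.length_eq, Multiset.card_add, Multiset.card_replicate,
      length_range] at this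
    omega
  subst hn
  exact ⟨P, ⟨by simpa [add_comm n] using hP, hd⟩, h0⟩

theorem hasStandardLinearRealization_of_even {g h : List ℕ} {n₁ n₂ y v c : ℕ}
    (hg : g.Perm (range (n₁ + 1))) (hg0 : g.head? = some 0) (hgl : g.getLast? = some n₁)
    (hh : h.Perm (range (n₂ + 1))) (hh0 : h.head? = some 0)
    (hy : y = n₁ + n₂ + 1) (hv : v = y + c) (heven : Even (n₁ + 1))
    (hmod : v % y = (n₁ + 1) % y) :
    HasStandardLinearRealization (Multiset.replicate c y + (linDiffs g + linDiffs h)) := by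
  have hjoin : g.getLast? = (h.map (· + n₁)).head? := by simp [hgl, hh0]
  set w₂ := (h.map (· + n₁)).tail
  have hw : g.dropLast ++ h.map (· + n₁) = g ++ w₂ := dropLast_append_eq_append_tail hjoin
  have hg_lt : ∀ u ∈ g, u < n₁ + 1 := fun u hu => mem_range.1 (hg.subset hu)
  have hw₂_ge : ∀ u ∈ w₂, n₁ + 1 ≤ u := by
    obtain ⟨t, rfl⟩ := head?_eq_some_iff.1 hh0
    have h0t : 0 ∉ t := (nodup_cons.1 (hh.nodup_iff.2 nodup_range)).1
    simp only [w₂, map_cons, tail_cons, mem_map]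
    rintro _ ⟨a, ha, rfl⟩
    have : a ≠ 0 := fun h => h0t (h ▸ ha)
    omega
  obtain ⟨n, hn⟩ := linDiffs_snake_append (v := v) (by omega) (by omega)
    (by rw [hg.length_eq, length_range]; exact heven)
    (fun u hu u' hu' => columnHeight_eq_of_lt (by omega) hmod (hg_lt u hu) (hg_lt u' hu'))
    (fun u hu u' hu' => columnHeight_eq_of_le hmod (hw₂_ge u hu) (hw₂_ge u' hu'))
  rw [← hw, linDiffs_dropLast_append hjoin, linDiffs_map_add] at hn
  refine hasStandardLinearRealization_of_perm_range ?_ ?_ hn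
  · rw [Multiset.card_add, card_linDiffs_of_perm hg, card_linDiffs_of_perm hh,
      show n₁ + n₂ + c + 1 = v by omega, hy]
    exact snake_perm_range (by omega) (perm_range_dropLast_append_map_add hg hgl hh)
  · rw [head?_snake (by omega) (by omega), dropLast_append_eq_append_tail hjoin,
      head?_append, hg0]
    rfl

lemma map_sub_range_perm (n : ℕ) : ((range n).map (n - 1 - ·)).Perm (range n) := by
  have := reverse_range' (s := 0) (n := n)
  rw [← range_eq_range', Nat.zero_add] at this
  rw [← this]
  exact reverse_perm _

lemma linDiffs_cons_zero_map_add_one {S : List ℕ} {y : ℕ} (hy : 0 < y)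
    (hS0 : S.head? = some (y - 1)) : linDiffs (0 :: S.map (· + 1)) = y ::ₘ linDiffs S := by
  obtain ⟨t, ht⟩ := head?_eq_some_iff.1 (show (S.map (· + 1)).head? = some y by
    rw [head?_map, hS0]
    simp only [Option.map_some, Nat.sub_add_cancel hy])
  rw [ht, linDiffs_cons_cons, ← ht, linDiffs_map_add]
  simp [Nat.dist]

theorem hasStandardLinearRealization_of_odd_of_lt {g h : List ℕ} {n₁ n₂ y v c : ℕ}
    (hg : g.Perm (range (n₁ + 1))) (hg0 : g.head? = some 0) (hgl : g.getLast? = some n₁)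
    (hh : h.Perm (range (n₂ + 1))) (hh0 : h.head? = some 0)
    (hy : y = n₁ + n₂ + 1) (hv : v = y + c) (heven : Even n₁) (hyv : y < v)
    (hmod : (v - 1) % y = (n₂ + 1) % y) :
    HasStandardLinearRealization (Multiset.replicate c y + (linDiffs g + linDiffs h)) := by
  have hjoin : g.getLast? = (h.map (· + n₁)).head? := by simp [hgl, hh0]
  have hw0 : (g.dropLast ++ h.map (· + n₁)).head? = some 0 := by
    rw [dropLast_append_eq_append_tail hjoin, head?_append, hg0]
    rfl
  set w := g.dropLast ++ h.map (· + n₁)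
  have hw : w.Perm (range y) := hy ▸ perm_range_dropLast_append_map_add hg hgl hh
  have hle : ∀ u ∈ w, u ≤ y - 1 := fun u hu => by
    have := mem_range.1 (hw.subset hu)
    omega
  have hlow : ∀ u ∈ g.dropLast.map (y - 1 - ·), n₂ + 1 ≤ u := by
    simp only [mem_map]
    rintro _ ⟨z, hz, rfl⟩
    have := mem_range.1 ((perm_range_dropLast hg hgl).subset hz)
    omega
  have hhigh : ∀ u ∈ (h.map (· + n₁)).map (y - 1 - ·), u < n₂ + 1 := by
    simp only [map_map, mem_map]
    rintro _ ⟨z, _, rfl⟩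
    simp only [Function.comp]
    omega
  obtain ⟨n, hn⟩ := linDiffs_snake_append (v := v - 1) (by omega) (by omega)
    (by rwa [length_map, (perm_range_dropLast hg hgl).length_eq, length_range])
    (fun u hu u' hu' => columnHeight_eq_of_le hmod (hlow u hu) (hlow u' hu'))
    (fun u hu u' hu' => columnHeight_eq_of_lt (by omega) hmod (hhigh u hu) (hhigh u' hu'))
  rw [← map_append, linDiffs_map_sub hle, linDiffs_dropLast_append hjoin,
    linDiffs_map_add] at hn
  set S := snake y (v - 1) (w.map (y - 1 - ·))
  have hS0 : S.head? = some (y - 1) := by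
    rw [head?_snake (by omega) (by omega), head?_map, hw0]
    rfl
  refine hasStandardLinearRealization_of_perm_range (P := 0 :: S.map (· + 1)) (n := n + 1) ?_
    rfl ?_
  · rw [Multiset.card_add, card_linDiffs_of_perm hg, card_linDiffs_of_perm hh,
      show n₁ + n₂ + c + 1 = v - 1 + 1 by omega, range_succ_eq_map]
    exact ((snake_perm_range (by omega) ((hw.map _).trans (map_sub_range_perm y))).map _).cons 0
  · rw [linDiffs_cons_zero_map_add_one (by omega) hS0, hn, Multiset.replicate_succ,
      Multiset.cons_add]

theorem hasStandardLinearRealization_of_odd {g h : List ℕ} {n₁ n₂ y v c : ℕ}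
    (hg : g.Perm (range (n₁ + 1))) (hg0 : g.head? = some 0) (hgl : g.getLast? = some n₁)
    (hh : h.Perm (range (n₂ + 1))) (hh0 : h.head? = some 0)
    (hy : y = n₁ + n₂ + 1) (hv : v = y + c) (hodd : Odd (n₁ + 1))
    (hmod : v % y = (n₂ + 1 + 1) % y) :
    HasStandardLinearRealization (Multiset.replicate c y + (linDiffs g + linDiffs h)) := by
  have heven : Even n₁ := by simpa [Nat.odd_add_one, Nat.not_odd_iff_even] using hodd
  rcases (show y ≤ v by omega).lt_or_eq with hyv | hyv
  · exact hasStandardLinearRealization_of_odd_of_lt hg hg0 hgl hh hh0 hy hv heven hyv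
      (Nat.ModEq.add_right_cancel' 1 (by rwa [Nat.sub_add_cancel (by omega)]))
  -- `v = y` forces `y ∣ n₂ + 2`, which leaves only `y = 1`
  have hdvd : y ∣ n₂ + 1 + 1 := Nat.dvd_of_mod_eq_zero (by rw [← hmod, ← hyv, Nat.mod_self])
  obtain rfl : n₁ = 0 := by
    have := Nat.le_of_dvd (by omega) hdvd
    rcases heven with ⟨k, rfl⟩
    omega
  have : y = 1 := Nat.eq_one_of_dvd_one ((Nat.dvd_add_right ⟨1, by omega⟩).1 hdvd)
  obtain rfl : n₂ = 0 := by omega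
  obtain rfl : c = 0 := by omega
  have hM : linDiffs g + linDiffs h = 0 := Multiset.card_eq_zero.1 (by
    rw [Multiset.card_add, card_linDiffs_of_perm hg, card_linDiffs_of_perm hh])
  rw [hM]
  exact ⟨[0], ⟨by simp, by simp⟩, rfl⟩

theorem stmt7_general (x a₁ b₁ a₂ b₂ c : ℕ)
    (h₁ : HasPerfectLinearRealization
      (Multiset.replicate a₁ 1 + Multiset.replicate b₁ x))
    (h₂ : HasStandardLinearRealization
      (Multiset.replicate a₂ 1 + Multiset.replicate b₂ x))
    (hcong :
      (Even (a₁ + b₁ + 1) ∧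
        (a₁ + a₂ + b₁ + b₂ + c + 1) % (a₁ + a₂ + b₁ + b₂ + 1) =
          (a₁ + b₁ + 1) % (a₁ + a₂ + b₁ + b₂ + 1)) ∨
      (Odd (a₁ + b₁ + 1) ∧
        (a₁ + a₂ + b₁ + b₂ + c + 1) % (a₁ + a₂ + b₁ + b₂ + 1) =
          (a₂ + b₂ + 1 + 1) % (a₁ + a₂ + b₁ + b₂ + 1))) :
    HasStandardLinearRealization
      (mset3 (a₁ + a₂) (b₁ + b₂) c x (a₁ + a₂ + b₁ + b₂ + 1)) := by
  obtain ⟨g, ⟨hg, hgd⟩, hg0, hgl⟩ := h₁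
  obtain ⟨h, ⟨hh, hhd⟩, hh0⟩ := h₂
  simp only [Multiset.card_add, Multiset.card_replicate] at hg hgl hh
  have hL : mset3 (a₁ + a₂) (b₁ + b₂) c x (a₁ + a₂ + b₁ + b₂ + 1) =
      Multiset.replicate c (a₁ + a₂ + b₁ + b₂ + 1) + (linDiffs g + linDiffs h) := by
    rw [hgd, hhd, mset3, Multiset.replicate_add, Multiset.replicate_add]
    abel
  rw [hL]
  rcases hcong with ⟨heven, hmod⟩ | ⟨hodd, hmod⟩
  · exact hasStandardLinearRealization_of_even hg hg0 hgl hh hh0 (by ring) (by ring) heven hmod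
  · exact hasStandardLinearRealization_of_odd hg hg0 hgl hh hh0 (by ring) (by ring) hodd hmod

/-- Shared-fauxset concatenation. With `v₁ = a₁ + b₁ + 1`,
`v₂ = a₂ + b₂ + 1`, `a = a₁ + a₂`, `b = b₁ + b₂`, `y = a + b + 1` and
`v = a + b + c + 1`: if `{1^{a₁}, x^{b₁}}` has a perfect linear realization,
`{1^{a₂}, x^{b₂}}` has a standard linear realization, and either `v₁` is even
with `v ≡ v₁ (mod y)`, or `v₁` is odd with `v ≡ v₂ + 1 (mod y)`, then
`{1^a, x^b, y^c}` has a standard linear realization. -/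
theorem stmt7 (x a₁ b₁ a₂ b₂ c : ℕ) (hx : 2 ≤ x)
    (h₁ : HasPerfectLinearRealization
      (Multiset.replicate a₁ 1 + Multiset.replicate b₁ x))
    (h₂ : HasStandardLinearRealization
      (Multiset.replicate a₂ 1 + Multiset.replicate b₂ x))
    (hcong :
      (Even (a₁ + b₁ + 1) ∧
        (a₁ + a₂ + b₁ + b₂ + c + 1) % (a₁ + a₂ + b₁ + b₂ + 1) =
          (a₁ + b₁ + 1) % (a₁ + a₂ + b₁ + b₂ + 1)) ∨
      (Odd (a₁ + b₁ + 1) ∧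
        (a₁ + a₂ + b₁ + b₂ + c + 1) % (a₁ + a₂ + b₁ + b₂ + 1) =
          (a₂ + b₂ + 1 + 1) % (a₁ + a₂ + b₁ + b₂ + 1))) :
    HasStandardLinearRealization
      (mset3 (a₁ + a₂) (b₁ + b₂) c x (a₁ + a₂ + b₁ + b₂ + 1)) :=
  stmt7_general x a₁ b₁ a₂ b₂ c h₁ h₂ hcong
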